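/- Let X ∈ ℝ^{n×p} be a matrix with restricted isometry constant δⱼ of order j, S₁, S₂ ⊆ {1,…,p} disjoint index sets with card(S₁ ∪ S₂) ≤ j, and P the orthogonal projection onto the column span of X_{S₁}. Then for every b ∈ ℝ^{card(S₂)}, (1 - δⱼ)‖b‖² ≤ ‖(I - P)X_{S₂}b‖² ≤ (1 + δⱼ)‖b‖². -/

import Mathlib

/-- A vector `b ∈ ℝᵖ` is `j`-sparse if it has at most `j` nonzero entries. -/
def Sparse {p : ℕ} (j : ℕ) (b : Fin p → ℝ) : Prop :=
  (Finset.univ.filter fun i => b i ≠ 0).card ≤ j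

/-- `δ` is the restricted isometry constant of order `j` of `X`: the smallest
`δ ≥ 0` with `(1-δ)‖b‖² ≤ ‖Xb‖² ≤ (1+δ)‖b‖²` for all `j`-sparse `b`. -/
def IsRIC {n p : ℕ} (X : Matrix (Fin n) (Fin p) ℝ) (j : ℕ) (δ : ℝ) : Prop :=
  IsLeast {d : ℝ | 0 ≤ d ∧ ∀ b : Fin p → ℝ, Sparse j b →
    (1 - d) * (∑ i, b i ^ 2) ≤ (∑ r, X.mulVec b r ^ 2) ∧
      (∑ r, X.mulVec b r ^ 2) ≤ (1 + d) * (∑ i, b i ^ 2)} δ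

/-!
Since `P X b` lies in the span of the columns indexed by `S₁`, it equals `X c` for some `c`
supported on `S₁`. Then `(I - P) X b = X (b - c)`, where `b - c` is supported on `S₁ ∪ S₂`, hence
`j`-sparse, and `‖b - c‖² = ‖b‖² + ‖c‖² ≥ ‖b‖²` because the supports are disjoint; the restricted
isometry property applied to `b - c` gives the lower bound. The upper bound holds because `I - P`
is itself an orthogonal projection, so `‖(I - P) X b‖ ≤ ‖X b‖`, and the restricted isometry
property applies to `b`.
-/

open Function Matrix

theorem Matrix.exists_mulVec_eq_of_mem_span_cols {R m n : Type*} [CommRing R] [Fintype n]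
    {q : ENNReal} {X : Matrix m n R} {S : Finset n} {x : WithLp q (m → R)}
    (hx : x ∈ Submodule.span R ((fun i => WithLp.toLp q fun r => X r i) '' ↑S)) :
    ∃ c : n → R, support c ⊆ S ∧ WithLp.toLp q (X *ᵥ c) = x := by
  classical
  obtain ⟨c, rfl⟩ := (Submodule.mem_span_image_finset_iff_exists_fun' R).mp hx
  refine ⟨fun i => if i ∈ S then c i else 0, fun i hi => by_contra fun h => hi (if_neg h), ?_⟩
  ext r
  simp [Matrix.mulVec, dotProduct, Finset.sum_apply, mul_comm]

theorem Sparse.of_support_subset {p j : ℕ} {b : Fin p → ℝ} {S : Finset (Fin p)}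
    (hb : support b ⊆ S) (hS : S.card ≤ j) : Sparse j b := by
  have hsub : (Finset.univ.filter fun i => b i ≠ 0) ⊆ S := fun i hi =>
    hb (Finset.mem_filter.1 hi).2
  exact (Finset.card_le_card hsub).trans hS

theorem sum_sq_le_sum_sq_sub_of_disjoint_support {ι : Type*} [Fintype ι] {b c : ι → ℝ}
    (h : Disjoint (support b) (support c)) : ∑ i, b i ^ 2 ≤ ∑ i, (b - c) i ^ 2 := by
  refine Finset.sum_le_sum fun i _ => ?_
  by_cases hbi : b i = 0
  · simp [hbi, sq_nonneg]
  · rw [Pi.sub_apply, notMem_support.1 (Set.disjoint_left.1 h hbi), sub_zero]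

theorem Submodule.norm_sub_orthogonalProjectionOnto_le {𝕜 E : Type*} [RCLike 𝕜]
    [NormedAddCommGroup E] [InnerProductSpace 𝕜 E] (K : Submodule 𝕜 E)
    [K.HasOrthogonalProjection] (v : E) : ‖v - K.orthogonalProjectionOnto v‖ ≤ ‖v‖ := by
  rw [← K.starProjection_apply, ← K.starProjection_orthogonal_val]
  exact Kᗮ.norm_starProjection_apply_le v

/-- Let `δ < 1` be the RIC of order `j` of `X`, let `S₁, S₂` be disjoint index
sets with `card(S₁ ∪ S₂) ≤ j`, and let `P` be the orthogonal projection onto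
the span of the columns of `X` indexed by `S₁`.  Then for every vector `b`
supported on `S₂` (representing `X_{S₂}b` via `X.mulVec b`),
`(1-δ)‖b‖² ≤ ‖(I - P)X b‖² ≤ (1+δ)‖b‖²`. -/
theorem stmt_10 {n p : ℕ} (X : Matrix (Fin n) (Fin p) ℝ) (j : ℕ) (δ : ℝ)
    (hδ : IsRIC X j δ) (hδ1 : δ < 1)
    (S₁ S₂ : Finset (Fin p)) (hdisj : Disjoint S₁ S₂)
    (hcard : (S₁ ∪ S₂).card ≤ j)
    (b : Fin p → ℝ) (hb : ∀ i, b i ≠ 0 → i ∈ S₂) :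
    letI K : Submodule ℝ (EuclideanSpace ℝ (Fin n)) :=
      Submodule.span ℝ
        ((fun i : Fin p => (show EuclideanSpace ℝ (Fin n) from WithLp.toLp 2 (fun r => X r i))) '' ↑S₁)
    letI v : EuclideanSpace ℝ (Fin n) := show _ from WithLp.toLp 2 (X.mulVec b)
    (1 - δ) * (∑ i, b i ^ 2) ≤
        ‖v - (Submodule.orthogonalProjectionOnto K v : EuclideanSpace ℝ (Fin n))‖ ^ 2 ∧
      ‖v - (Submodule.orthogonalProjectionOnto K v : EuclideanSpace ℝ (Fin n))‖ ^ 2 ≤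
        (1 + δ) * (∑ i, b i ^ 2) := by
  dsimp only
  set K := Submodule.span ℝ ((fun i => WithLp.toLp 2 fun r => X r i) '' ↑S₁)
  set v : EuclideanSpace ℝ (Fin n) := WithLp.toLp 2 (X *ᵥ b)
  obtain ⟨-, hrip⟩ := hδ.1
  obtain ⟨c, hc, hPv⟩ := exists_mulVec_eq_of_mem_span_cols (K.orthogonalProjectionOnto v).2
  have hres : v - K.orthogonalProjectionOnto v = WithLp.toLp 2 (X *ᵥ (b - c)) := by
    rw [← hPv, mulVec_sub, WithLp.toLp_sub]
  have hb_sparse : Sparse j b :=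
    .of_support_subset hb (hcard.trans' (Finset.card_le_card Finset.subset_union_right))
  have hbc_sparse : Sparse j (b - c) := by
    refine .of_support_subset ((support_sub b c).trans ?_) hcard
    rw [Finset.coe_union, Set.union_comm (S₁ : Set (Fin p))]
    exact Set.union_subset_union hb hc
  constructor
  · calc (1 - δ) * ∑ i, b i ^ 2
        ≤ (1 - δ) * ∑ i, (b - c) i ^ 2 :=
          mul_le_mul_of_nonneg_left (sum_sq_le_sum_sq_sub_of_disjoint_support
            ((Finset.disjoint_coe.2 hdisj).mono hc hb).symm) (by linarith)
      _ ≤ ∑ r, (X *ᵥ (b - c)) r ^ 2 := (hrip _ hbc_sparse).1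
      _ = _ := by rw [hres, EuclideanSpace.real_norm_sq_eq]
  · calc ‖v - K.orthogonalProjectionOnto v‖ ^ 2 ≤ ‖v‖ ^ 2 := by
          gcongr
          exact K.norm_sub_orthogonalProjectionOnto_le v
      _ = ∑ r, (X *ᵥ b) r ^ 2 := EuclideanSpace.real_norm_sq_eq v
      _ ≤ (1 + δ) * ∑ i, b i ^ 2 := (hrip b hb_sparse).2
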